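/- For every complex z with 0 < |z| < 1, the series sum over k≥1 of z^(2k)/((2k-1)(2k)^2(2k+1)) equals 1/2 - (1/4)Li₂(z²) - (1/2)((1-z²)/z)·arctanh(z), where Li₂ is the dilogarithm. -/

import Mathlib

noncomputable def carctanh (z : ℂ) : ℂ := (1 / 2) * Complex.log ((1 + z) / (1 - z))

noncomputable def Li2 (z : ℂ) : ℂ := ∑' n : ℕ, z ^ (n + 1) / ((n : ℂ) + 1) ^ 2

/-!
Split the summand by partial fractions,
`1 / ((n - 1) n² (n + 1)) = (1 / (n - 1) - 1 / (n + 1)) / 2 - 1 / n²` with `n = 2k + 2`.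
The two outer pieces are odd-power logarithmic series: since
`arctanh z = ∑ z^(2k+1) / (2k+1)`, the first sums to `z · arctanh z` and the last, an index shift
of the same series, to `(arctanh z - z) / z`. The middle piece is the even part of the dilogarithm,
`Li₂(z²) / 4`.
-/

lemma Complex.log_one_add_div_one_sub {z : ℂ} (hz : ‖z‖ < 1) :
    Complex.log ((1 + z) / (1 - z)) = Complex.log (1 + z) - Complex.log (1 - z) := by
  simpa [mul_assoc, sub_eq_add_neg] using
    (Complex.hasSum_arctan_aux (z := -z * Complex.I) (by simpa using hz)).symm

lemma hasSum_carctanh {z : ℂ} (hz : ‖z‖ < 1) :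
    HasSum (fun k : ℕ => z ^ (2 * k + 1) / (2 * (k : ℂ) + 1)) (carctanh z) := by
  have hlog := ((Complex.hasSum_taylorSeries_neg_log hz).sub
    (Complex.hasSum_taylorSeries_neg_log (norm_neg z ▸ hz))).mul_left (1 / 2)
  have heven : ∀ n ∉ Set.range (fun k : ℕ => 2 * k + 1),
      (1 / 2 : ℂ) * (z ^ n / n - (-z) ^ n / n) = 0 := by
    intro n hn
    obtain ⟨m, rfl⟩ := Nat.not_odd_iff_even.mp fun ⟨k, hk⟩ => hn ⟨k, hk.symm⟩
    simp [← two_mul, Even.neg_pow (even_two_mul m)]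
  have hinj : Function.Injective (fun k : ℕ => 2 * k + 1) := fun a b hab => by simpa using hab
  convert (hinj.hasSum_iff heven).mpr hlog using 1
  · ext k
    simp [Odd.neg_pow (odd_two_mul_add_one k)]
    ring
  · rw [carctanh, Complex.log_one_add_div_one_sub hz, sub_neg_eq_add, sub_neg_eq_add]
    ring

lemma hasSum_pow_div_two_mul_add_three {z : ℂ} (hz₀ : z ≠ 0) (hz : ‖z‖ < 1) :
    HasSum (fun k : ℕ => z ^ (2 * k + 2) / (2 * (k : ℂ) + 3)) ((carctanh z - z) / z) := by
  have htail := (hasSum_nat_add_iff' 1).mpr (hasSum_carctanh hz)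
  rw [show ∑ k ∈ Finset.range 1, z ^ (2 * k + 1) / (2 * (k : ℂ) + 1) = z by simp] at htail
  refine (htail.div_const z).congr_fun fun k => ?_
  rw [show 2 * (k + 1) + 1 = 2 * k + 2 + 1 by ring, pow_succ]
  push_cast
  field_simp
  ring

lemma hasSum_Li2 {w : ℂ} (hw : ‖w‖ ≤ 1) :
    HasSum (fun n : ℕ => w ^ (n + 1) / ((n : ℂ) + 1) ^ 2) (Li2 w) := by
  refine Summable.hasSum (.of_norm_bounded (g := fun n : ℕ => 1 / ((n + 1 : ℕ) : ℝ) ^ 2) ?_ ?_)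
  · exact (summable_nat_add_iff 1).mpr (Real.summable_one_div_nat_pow.mpr one_lt_two)
  · intro n
    rw [norm_div, norm_pow, norm_pow]
    push_cast
    norm_cast
    gcongr
    exact pow_le_one₀ (norm_nonneg w) hw

lemma hasSum_Li2_sq {z : ℂ} (hz : ‖z‖ ≤ 1) :
    HasSum (fun k : ℕ => z ^ (2 * k + 2) / (2 * (k : ℂ) + 2) ^ 2) (Li2 (z ^ 2) / 4) := by
  refine ((hasSum_Li2 (w := z ^ 2) ?_).div_const 4).congr_fun fun k => ?_
  · simpa using pow_le_one₀ (n := 2) (norm_nonneg z) hz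
  rw [← pow_mul, mul_add_one]
  field_simp
  ring

lemma div_eq_partial_fractions (w : ℂ) (k : ℕ) :
    w / ((2 * (k : ℂ) + 1) * (2 * k + 2) ^ 2 * (2 * k + 3)) =
      (w / (2 * k + 1) - w / (2 * k + 3)) / 2 - w / (2 * k + 2) ^ 2 := by
  have h1 : (2 * (k : ℂ) + 1) ≠ 0 := by exact_mod_cast (2 * k).succ_ne_zero
  have h2 : (2 * (k : ℂ) + 2) ≠ 0 := by exact_mod_cast (2 * k + 1).succ_ne_zero
  have h3 : (2 * (k : ℂ) + 3) ≠ 0 := by exact_mod_cast (2 * k + 2).succ_ne_zero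
  field_simp
  ring

theorem stmt_7 (z : ℂ) (hz : z ≠ 0) (h : ‖z‖ < 1) :
    ∑' k : ℕ, z ^ (2 * k + 2) / ((2 * (k : ℂ) + 1) * (2 * k + 2) ^ 2 * (2 * k + 3)) =
      1 / 2 - (1 / 4) * Li2 (z ^ 2) - (1 / 2) * ((1 - z ^ 2) / z) * carctanh z := by
  have hA : HasSum (fun k : ℕ => z ^ (2 * k + 2) / (2 * (k : ℂ) + 1)) (z * carctanh z) :=
    ((hasSum_carctanh h).mul_left z).congr_fun fun k => by ring
  have hC := hasSum_pow_div_two_mul_add_three hz h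
  have hB := hasSum_Li2_sq h.le
  rw [((((hA.sub hC).div_const 2).sub hB).congr_fun fun k => div_eq_partial_fractions _ k).tsum_eq]
  field_simp
  ring
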